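/- Let Ω ⊂ ℝⁿ be a bounded open set, T > 0, g : (ℝⁿ ∖ Ω) × [0,T] → ℝ and u₀ : Ω → ℝ. Let a : ℝⁿ → ℝ be smooth and bounded with bounded derivatives and a(x) ≥ a₀ for some constant a₀ > 0. Suppose ṽ : ℝⁿ × [0,T] → ℝ is bounded and continuous, continuously differentiable in t, such that for each t the product a·ṽ(·,t) belongs to C²(ℝⁿ) with first and second derivatives bounded uniformly in t and α-Hölder second derivatives with a constant H uniform in t, and that ṽ satisfies the Fokker–Planck equation ∂ₜṽ(x,t) = Δ(a ṽ(·,t))(x) for x ∈ Ω and t ∈ (0,T], ṽ(x,t) = g(x,t) for x ∉ Ω, and ṽ(x,0) = u₀(x) for x ∈ Ω. For each 0 < ε ≤ 1 let u^ε : ℝⁿ × [0,T] → ℝ be bounded, continuous on cl(Ω) × [0,T], differentiable in t on (0,T] for each x ∈ Ω, and satisfy ∂ₜu^ε(x,t) = ℒ_ε u^ε(·,t)(x) for x ∈ Ω and t ∈ (0,T], where ℒ_ε u(x) = (2/(C(J) ε^{n+2})) ∫_{ℝⁿ} J((x − y)/ε)(a(y)u(y) − a(x)u(x)) dy, together with u^ε(x,t)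 = g(x,t) for x ∉ Ω and u^ε(x,0) = u₀(x) for x ∈ Ω. Then there exists a constant c, independent of ε, such that sup_{(x,t) ∈ Ω × [0,T]} |u^ε(x,t) − ṽ(x,t)| ≤ c ε^α for all 0 < ε ≤ 1. (This is the abelian instance of the paper's Theorem 1.2.) -/

import Mathlib

set_option maxHeartbeats 1600000

open MeasureTheory Matrix Set

/-- First partial derivative `∂ᵢ f (x)`. -/
noncomputable def pd1 {n : ℕ} (f : EuclideanSpace ℝ (Fin n) → ℝ)
    (x : EuclideanSpace ℝ (Fin n)) (i : Fin n) : ℝ :=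
  fderiv ℝ f x (EuclideanSpace.single i 1)

/-- Second partial derivative `∂ᵢ∂ⱼ f (x)`. -/
noncomputable def pd2 {n : ℕ} (f : EuclideanSpace ℝ (Fin n) → ℝ)
    (x : EuclideanSpace ℝ (Fin n)) (i j : Fin n) : ℝ :=
  fderiv ℝ (fderiv ℝ f) x (EuclideanSpace.single i 1) (EuclideanSpace.single j 1)

/-- The Laplacian `Δf(x) = ∑ᵢ ∂ᵢ∂ᵢ f(x)`. -/
noncomputable def lap {n : ℕ} (f : EuclideanSpace ℝ (Fin n) → ℝ)
    (x : EuclideanSpace ℝ (Fin n)) : ℝ :=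
  ∑ i, pd2 f x i i

/-- The rescaled nonlocal Fokker–Planck operator
`ℒ_ε u(x) = (2/(C(J)ε^{n+2})) ∫ J((x−y)/ε)(a(y)u(y) − a(x)u(x)) dy`. -/
noncomputable def Lop {n : ℕ} (J : EuclideanSpace ℝ (Fin n) → ℝ) (CJ : ℝ)
    (a : EuclideanSpace ℝ (Fin n) → ℝ) (ε : ℝ)
    (u : EuclideanSpace ℝ (Fin n) → ℝ) (x : EuclideanSpace ℝ (Fin n)) : ℝ :=
  2 / (CJ * ε ^ (n + 2)) * ∫ y, J (ε⁻¹ • (x - y)) * (a y * u y - a x * u x)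

section Helpers

variable {n : ℕ}

lemma integrable_mul_bdd {J q : EuclideanSpace ℝ (Fin n) → ℝ} (hJ : Integrable J)
    (hq : AEStronglyMeasurable q volume) {M : ℝ} (hM : ∀ z, |q z| ≤ M) :
    Integrable (fun z => J z * q z) := by
  refine ((hJ.abs.const_mul M)).mono' (hJ.aestronglyMeasurable.mul hq)
    (Filter.Eventually.of_forall fun z => ?_)
  rw [Real.norm_eq_abs, abs_mul]
  calc |J z| * |q z| ≤ |J z| * M :=
        mul_le_mul_of_nonneg_left (hM z) (abs_nonneg _)
    _ = M * |J z| := mul_comm _ _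

lemma integrable_mul_cont {J q : EuclideanSpace ℝ (Fin n) → ℝ} (hJ : Integrable J)
    (hJcs : HasCompactSupport J) (hq : Continuous q) :
    Integrable (fun z => J z * q z) := by
  obtain ⟨M, hM⟩ := hJcs.exists_bound_of_continuousOn hq.continuousOn
  refine ((hJ.abs.const_mul M)).mono' (hJ.aestronglyMeasurable.mul hq.aestronglyMeasurable)
    (Filter.Eventually.of_forall fun z => ?_)
  rw [Real.norm_eq_abs, abs_mul]
  by_cases hz : z ∈ tsupport J
  · calc |J z| * |q z| ≤ |J z| * M := by
          have := hM z hz; rw [Real.norm_eq_abs] at this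
          exact mul_le_mul_of_nonneg_left this (abs_nonneg _)
      _ = M * |J z| := mul_comm _ _
  · simp [image_eq_zero_of_notMem_tsupport hz]

lemma coord_le_norm (h : EuclideanSpace ℝ (Fin n)) (i : Fin n) : |h i| ≤ ‖h‖ := by
  rw [EuclideanSpace.norm_eq]
  calc |h i| = Real.sqrt (‖h i‖ ^ 2) := by
        rw [Real.sqrt_sq_eq_abs, Real.norm_eq_abs, abs_abs]
    _ ≤ _ := Real.sqrt_le_sqrt (Finset.single_le_sum
        (f := fun j => ‖h j‖ ^ 2) (fun j _ => sq_nonneg _) (Finset.mem_univ i))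

lemma eucl_repr (h : EuclideanSpace ℝ (Fin n)) :
    h = ∑ i, h i • EuclideanSpace.single i (1:ℝ) := by
  ext j
  rw [WithLp.ofLp_sum, Finset.sum_apply]
  simp [EuclideanSpace.single_apply]

lemma bilin_expand (B : EuclideanSpace ℝ (Fin n) →L[ℝ] EuclideanSpace ℝ (Fin n) →L[ℝ] ℝ)
    (h k : EuclideanSpace ℝ (Fin n)) :
    B h k = ∑ i, ∑ j, h i * k j *
      B (EuclideanSpace.single i (1:ℝ)) (EuclideanSpace.single j (1:ℝ)) := by
  conv_lhs => rw [eucl_repr h, eucl_repr k]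
  simp only [map_sum, _root_.map_smul, ContinuousLinearMap.sum_apply,
    ContinuousLinearMap.smul_apply, smul_eq_mul, Finset.mul_sum]
  rw [Finset.sum_comm]
  exact Finset.sum_congr rfl fun i _ => Finset.sum_congr rfl fun j _ => by ring

lemma bilin_holder {f : EuclideanSpace ℝ (Fin n) → ℝ} {H α : ℝ}
    (hHol : ∀ x y, ∀ i j : Fin n, |pd2 f x i j - pd2 f y i j| ≤ H * ‖x - y‖ ^ α)
    (u w h : EuclideanSpace ℝ (Fin n)) :
    |fderiv ℝ (fderiv ℝ f) u h h - fderiv ℝ (fderiv ℝ f) w h h|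
      ≤ (n^2 * ‖h‖^2) * (H * ‖u - w‖ ^ α) := by
  rw [bilin_expand (fderiv ℝ (fderiv ℝ f) u) h h,
    bilin_expand (fderiv ℝ (fderiv ℝ f) w) h h, ← Finset.sum_sub_distrib]
  calc |∑ i, (∑ j, h i * h j * pd2 f u i j - ∑ j, h i * h j * pd2 f w i j)|
      ≤ ∑ i : Fin n, ∑ j : Fin n, ‖h‖ * ‖h‖ * (H * ‖u - w‖ ^ α) := by
        refine (Finset.abs_sum_le_sum_abs _ _).trans (Finset.sum_le_sum fun i _ => ?_)
        rw [← Finset.sum_sub_distrib]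
        refine (Finset.abs_sum_le_sum_abs _ _).trans (Finset.sum_le_sum fun j _ => ?_)
        rw [← mul_sub, abs_mul, abs_mul]
        exact mul_le_mul (mul_le_mul (coord_le_norm h i) (coord_le_norm h j)
          (abs_nonneg _) (norm_nonneg _)) (hHol u w i j) (abs_nonneg _) (by positivity)
    _ = (n^2 * ‖h‖^2) * (H * ‖u - w‖ ^ α) := by
        rw [Finset.sum_const, Finset.sum_const, Finset.card_univ, Fintype.card_fin,
          nsmul_eq_mul, nsmul_eq_mul]
        ring

lemma taylor_sym {f : EuclideanSpace ℝ (Fin n) → ℝ} (hf : ContDiff ℝ 2 f)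
    {H α : ℝ} (hH : 0 ≤ H) (hα0 : 0 < α)
    (hHol : ∀ x y, ∀ i j : Fin n, |pd2 f x i j - pd2 f y i j| ≤ H * ‖x - y‖ ^ α)
    (x h : EuclideanSpace ℝ (Fin n)) :
    |f (x + h) + f (x - h) - 2 * f x - ∑ i, ∑ j, h i * h j * pd2 f x i j|
      ≤ 2 * (n^2 * ‖h‖^2) * (H * ‖h‖ ^ α) := by
  set g := fderiv ℝ f with hg
  set Bd := fderiv ℝ (fderiv ℝ f) with hBd
  have hfd : Differentiable ℝ f := hf.differentiable (by norm_num)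
  have hgd : Differentiable ℝ g := (hf.fderiv_right (m := 1) (by norm_num)).differentiable (by norm_num)
  set Q : ℝ := ∑ i, ∑ j, h i * h j * pd2 f x i j with hQ
  have hQB : Q = Bd x h h := by
    rw [hQ, bilin_expand (Bd x) h h]; rfl
  have l1 : ∀ s : ℝ, HasDerivAt (fun s : ℝ => x + s • h) h s := fun s => by
    simpa using ((hasDerivAt_id s).smul_const h).const_add x
  have l2 : ∀ s : ℝ, HasDerivAt (fun s : ℝ => x - s • h) (-h) s := fun s => by
    simpa using ((hasDerivAt_id s).smul_const h).const_sub x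
  have d1 : ∀ s : ℝ, HasDerivAt (fun s => f (x + s • h)) (g (x + s • h) h) s := fun s =>
    (hfd (x + s • h)).hasFDerivAt.comp_hasDerivAt s (l1 s)
  have d2 : ∀ s : ℝ, HasDerivAt (fun s => f (x - s • h)) (-(g (x - s • h) h)) s := fun s => by
    have := (hfd (x - s • h)).hasFDerivAt.comp_hasDerivAt s (l2 s)
    simpa [hg, Function.comp_def] using this
  have e1 : ∀ s : ℝ, HasDerivAt (fun s => g (x + s • h) h) (Bd (x + s • h) h h) s := fun s => by
    have h1 : HasDerivAt (fun s => g (x + s • h)) (Bd (x + s • h) h) s :=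
      (hgd (x + s • h)).hasFDerivAt.comp_hasDerivAt s (l1 s)
    exact (ContinuousLinearMap.apply ℝ ℝ h).hasFDerivAt.comp_hasDerivAt s h1
  have e2 : ∀ s : ℝ, HasDerivAt (fun s => g (x - s • h) h) (-(Bd (x - s • h) h h)) s := fun s => by
    have h1 : HasDerivAt (fun s => g (x - s • h)) (-(Bd (x - s • h) h)) s := by
      have := (hgd (x - s • h)).hasFDerivAt.comp_hasDerivAt s (l2 s)
      simpa [hg, hBd, Function.comp_def] using this
    have := (ContinuousLinearMap.apply ℝ ℝ h).hasFDerivAt.comp_hasDerivAt s h1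
    simpa [Function.comp_def] using this
  set q : ℝ → ℝ := fun s => f (x + s • h) + f (x - s • h) - 2 * f x - s^2 * Q with hq
  set q' : ℝ → ℝ := fun s => g (x + s • h) h - g (x - s • h) h - 2 * s * Q with hq'
  have hdq : ∀ s : ℝ, HasDerivAt q (q' s) s := fun s => by
    have := (((d1 s).add (d2 s)).sub_const (2 * f x)).sub ((hasDerivAt_pow 2 s).mul_const Q)
    exact this.congr_deriv (by simp only [hq']; norm_num; ring)
  have hdq' : ∀ s : ℝ, HasDerivAt q' (Bd (x + s • h) h h + Bd (x - s • h) h h - 2 * Q) s :=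
    fun s => by
    have := ((e1 s).sub (e2 s)).sub (((hasDerivAt_id s).const_mul (2:ℝ)).mul_const Q)
    exact this.congr_deriv (by ring)
  set C : ℝ := 2 * (n^2 * ‖h‖^2) * (H * ‖h‖ ^ α) with hC
  have hC0 : 0 ≤ C := by positivity
  have bound2 : ∀ s ∈ Icc (0:ℝ) 1, |Bd (x + s • h) h h + Bd (x - s • h) h h - 2 * Q| ≤ C := by
    intro s hs
    have key : ∀ u : EuclideanSpace ℝ (Fin n), ‖u - x‖ ≤ ‖h‖ →
        |Bd u h h - Bd x h h| ≤ (n^2 * ‖h‖^2) * (H * ‖h‖ ^ α) := by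
      intro u hu
      refine (bilin_holder hHol u x h).trans ?_
      have : ‖u - x‖ ^ α ≤ ‖h‖ ^ α :=
        Real.rpow_le_rpow (norm_nonneg _) hu hα0.le
      have hn2 : (0:ℝ) ≤ (n:ℝ)^2 * ‖h‖^2 := by positivity
      exact mul_le_mul_of_nonneg_left (mul_le_mul_of_nonneg_left this hH) hn2
    have hsn : ‖s • h‖ ≤ ‖h‖ := by
      rw [norm_smul, Real.norm_eq_abs, abs_of_nonneg hs.1]
      nlinarith [norm_nonneg h, hs.2]
    have k1 := key (x + s • h) (by simpa using hsn)
    have k2 := key (x - s • h) (by simpa [neg_smul] using hsn)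
    rw [hQB]
    have : Bd (x + s • h) h h + Bd (x - s • h) h h - 2 * (Bd x h h)
        = (Bd (x + s • h) h h - Bd x h h) + (Bd (x - s • h) h h - Bd x h h) := by ring
    rw [this]
    refine (abs_add_le _ _).trans ?_
    have hCC : C = (n^2 * ‖h‖^2) * (H * ‖h‖ ^ α) + (n^2 * ‖h‖^2) * (H * ‖h‖ ^ α) := by
      rw [hC]; ring
    rw [hCC]
    exact add_le_add k1 k2
  have hq'0 : q' 0 = 0 := by simp [hq']
  have mvt1 : ∀ s ∈ Icc (0:ℝ) 1, |q' s| ≤ C := by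
    intro s hs
    have := norm_image_sub_le_of_norm_deriv_le_segment'
      (f := q') (f' := fun s => Bd (x + s • h) h h + Bd (x - s • h) h h - 2 * Q)
      (a := 0) (b := 1)
      (fun u hu => (hdq' u).hasDerivWithinAt)
      (fun u hu => by
        rw [Real.norm_eq_abs]; exact bound2 u (Ico_subset_Icc_self hu)) s hs
    rw [hq'0, sub_zero, Real.norm_eq_abs] at this
    calc |q' s| ≤ C * (s - 0) := this
      _ ≤ C := by nlinarith [hs.1, hs.2]
  have hq0 : q 0 = 0 := by simp [hq]; ring
  have mvt2 := norm_image_sub_le_of_norm_deriv_le_segment'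
    (f := q) (f' := q') (a := 0) (b := 1)
    (fun u hu => (hdq u).hasDerivWithinAt)
    (fun u hu => by rw [Real.norm_eq_abs]; exact mvt1 u (Ico_subset_Icc_self hu))
    1 (right_mem_Icc.2 zero_le_one)
  rw [hq0, sub_zero, Real.norm_eq_abs] at mvt2
  have : q 1 = f (x + h) + f (x - h) - 2 * f x - Q := by simp [hq]
  rw [this] at mvt2
  simpa using mvt2

lemma consistency
    (J : EuclideanSpace ℝ (Fin n) → ℝ) (hJint : Integrable J) (hJcs : HasCompactSupport J)
    (hJ0 : ∀ x, 0 ≤ J x) (hJeven : ∀ x, J (-x) = J x)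
    (CJ : ℝ) (hCJ : 0 < CJ)
    (hJmom : ∀ i j : Fin n, ∫ x, J x * (x i * x j) = if i = j then CJ else 0)
    {α H : ℝ} (hα0 : 0 < α) (hH : 0 ≤ H)
    {f : EuclideanSpace ℝ (Fin n) → ℝ} (hf : ContDiff ℝ 2 f)
    {M : ℝ} (hfb : ∀ z, |f z| ≤ M)
    (hHol : ∀ x y, ∀ i j : Fin n, |pd2 f x i j - pd2 f y i j| ≤ H * ‖x - y‖ ^ α)
    (x : EuclideanSpace ℝ (Fin n)) {ε : ℝ} (hε : 0 < ε) :
    |2 / (CJ * ε ^ (n + 2)) * (∫ y, J (ε⁻¹ • (x - y)) * (f y - f x)) - lap f x|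
      ≤ (2 * n^2 * H / CJ * ∫ z, J z * ‖z‖ ^ ((2:ℝ)+α)) * ε ^ α := by
  have hfc : Continuous f := hf.continuous
  have hM0 : 0 ≤ M := le_trans (abs_nonneg _) (hfb x)
  set P : EuclideanSpace ℝ (Fin n) → ℝ := fun u => J (ε⁻¹ • u) * (f (x - u) - f x) with hP
  have step1 : ∫ y, J (ε⁻¹ • (x - y)) * (f y - f x) = ∫ u, P u := by
    rw [← integral_sub_left_eq_self P volume x]
    congr 1; funext y; simp [hP]
  have step2 : ∫ u, P u = ε ^ n * ∫ z, J z * (f (x - ε • z) - f x) := by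
    have h2 : ∀ z, P (ε • z) = J z * (f (x - ε • z) - f x) := by
      intro z; simp [hP, smul_smul, inv_mul_cancel₀ hε.ne']
    rw [show (∫ u, P u) = ε ^ n • ∫ z, P (ε • z) by
      rw [MeasureTheory.Measure.integral_comp_smul_of_nonneg volume P ε (hR := hε.le),
        finrank_euclideanSpace_fin, smul_smul, mul_inv_cancel₀ (by positivity), one_smul]]
    rw [smul_eq_mul]
    congr 1; exact integral_congr_ae (Filter.Eventually.of_forall h2)
  have intm : ∀ g : EuclideanSpace ℝ (Fin n) → ℝ, Continuous g → (∀ z, |g z| ≤ 2*M) →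
      Integrable (fun z => J z * g z) := fun g hg hb =>
    integrable_mul_bdd hJint hg.aestronglyMeasurable hb
  have hb1 : ∀ z, |f (x - ε • z) - f x| ≤ 2*M := fun z => by
    have := hfb (x - ε • z); have := hfb x
    calc |f (x - ε • z) - f x| ≤ |f (x - ε • z)| + |f x| := abs_sub _ _
      _ ≤ 2*M := by linarith
  have hb2 : ∀ z, |f (x + ε • z) - f x| ≤ 2*M := fun z => by
    have := hfb (x + ε • z); have := hfb x
    calc |f (x + ε • z) - f x| ≤ |f (x + ε • z)| + |f x| := abs_sub _ _
      _ ≤ 2*M := by linarith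
  have int1 : Integrable (fun z => J z * (f (x - ε • z) - f x)) :=
    intm _ (by fun_prop) hb1
  have int2 : Integrable (fun z => J z * (f (x + ε • z) - f x)) :=
    intm _ (by fun_prop) hb2
  have hev : ∫ z, J z * (f (x - ε • z) - f x) = ∫ z, J z * (f (x + ε • z) - f x) := by
    rw [← integral_neg_eq_self (fun z => J z * (f (x + ε • z) - f x)) volume]
    congr 1; funext z
    rw [smul_neg, hJeven]
    simp [sub_eq_add_neg]
  set S : ℝ := ∫ z, J z * (f (x + ε • z) + f (x - ε • z) - 2 * f x) with hS
  have step3 : 2 * ∫ z, J z * (f (x - ε • z) - f x) = S := by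
    rw [two_mul]
    nth_rewrite 2 [hev]
    rw [hS, ← integral_add int1 int2]
    congr 1; funext z; ring
  have intzz : ∀ i j : Fin n, Integrable (fun z : EuclideanSpace ℝ (Fin n) =>
      pd2 f x i j * (J z * (z i * z j))) := by
    intro i j
    exact (integrable_mul_cont hJint hJcs
      (by fun_prop)).const_mul _
  have step4 : ∫ z, J z * (∑ i, ∑ j, z i * z j * pd2 f x i j) = CJ * lap f x := by
    have rw1 : ∀ z : EuclideanSpace ℝ (Fin n), J z * (∑ i, ∑ j, z i * z j * pd2 f x i j)
        = ∑ i, ∑ j, pd2 f x i j * (J z * (z i * z j)) := by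
      intro z
      rw [Finset.mul_sum]
      refine Finset.sum_congr rfl fun i _ => ?_
      rw [Finset.mul_sum]
      exact Finset.sum_congr rfl fun j _ => by ring
    rw [integral_congr_ae (Filter.Eventually.of_forall rw1)]
    rw [integral_finset_sum _ (fun i _ => integrable_finset_sum _ (fun j _ => intzz i j))]
    have : ∀ i, ∫ z, (∑ j, pd2 f x i j * (J z * (z i * z j)))
        = ∑ j, pd2 f x i j * ∫ z, J z * (z i * z j) := by
      intro i
      rw [integral_finset_sum _ (fun j _ => intzz i j)]
      exact Finset.sum_congr rfl fun j _ => MeasureTheory.integral_const_mul _ _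
    rw [Finset.sum_congr rfl fun i _ => this i]
    have : ∀ i : Fin n, (∑ j, pd2 f x i j * ∫ z, J z * (z i * z j)) = pd2 f x i i * CJ := by
      intro i
      rw [Finset.sum_eq_single i]
      · rw [hJmom i i, if_pos rfl]
      · intro j _ hj
        rw [hJmom i j, if_neg (fun hh => hj hh.symm), mul_zero]
      · intro hh; exact absurd (Finset.mem_univ i) hh
    rw [Finset.sum_congr rfl fun i _ => this i, lap]
    rw [Finset.mul_sum]
    exact Finset.sum_congr rfl fun i _ => by ring
  set I2 : ℝ := ∫ z, J z * (f (x - ε • z) - f x) with hI2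
  have hLop : 2 / (CJ * ε ^ (n + 2)) * (∫ y, J (ε⁻¹ • (x - y)) * (f y - f x))
      = S / (CJ * ε ^ 2) := by
    rw [step1, step2, ← step3]
    have hεne : ε ≠ 0 := hε.ne'
    have hCJne : CJ ≠ 0 := hCJ.ne'
    field_simp
    ring
  set Qf : EuclideanSpace ℝ (Fin n) → ℝ := fun z => ∑ i, ∑ j, z i * z j * pd2 f x i j
    with hQf
  have hQfc : Continuous Qf := by
    refine continuous_finset_sum _ (fun i _ => continuous_finset_sum _ (fun j _ => ?_))
    fun_prop
  set A : EuclideanSpace ℝ (Fin n) → ℝ :=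
    fun z => f (x + ε • z) + f (x - ε • z) - 2 * f x with hA
  have hAc : Continuous A := by fun_prop
  have hAb : ∀ z, |A z| ≤ 4 * M := fun z => by
    have := hfb (x + ε • z); have := hfb x; have := hfb (x - ε • z)
    rw [hA]
    have h1 : |f (x + ε • z) + f (x - ε • z) - 2 * f x|
        ≤ |f (x + ε • z)| + |f (x - ε • z)| + |2 * f x| := by
      calc _ ≤ |f (x + ε • z) + f (x - ε • z)| + |2 * f x| := abs_sub _ _
        _ ≤ _ := by gcongr; exact abs_add_le _ _
    rw [abs_mul] at h1
    simp only [abs_two] at h1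
    linarith
  have intA : Integrable (fun z => J z * A z) :=
    integrable_mul_bdd hJint hAc.aestronglyMeasurable hAb
  have intQ : Integrable (fun z => J z * (ε ^ 2 * Qf z)) := by
    have := (integrable_mul_cont hJint hJcs hQfc).const_mul (ε ^ 2)
    refine this.congr (Filter.Eventually.of_forall fun z => ?_)
    simp; ring
  have hrp : Continuous (fun z : EuclideanSpace ℝ (Fin n) => ‖z‖ ^ ((2:ℝ)+α)) :=
    continuous_norm.rpow_const (fun z => Or.inr (by positivity))
  have intmaj : Integrable (fun z => J z * (2 * n^2 * H * (ε^2 * ε ^ α) * ‖z‖ ^ ((2:ℝ)+α))) := by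
    have := (integrable_mul_cont hJint hJcs hrp).const_mul (2 * (n:ℝ)^2 * H * (ε^2 * ε ^ α))
    refine this.congr (Filter.Eventually.of_forall fun z => ?_)
    ring
  have tay : ∀ z : EuclideanSpace ℝ (Fin n),
      |A z - ε ^ 2 * Qf z| ≤ 2 * n^2 * H * (ε^2 * ε ^ α) * ‖z‖ ^ ((2:ℝ)+α) := by
    intro z
    have t1 := taylor_sym hf hH hα0 hHol x (ε • z)
    have hsum : (∑ i, ∑ j, (ε • z) i * (ε • z) j * pd2 f x i j) = ε ^ 2 * Qf z := by
      rw [hQf, Finset.mul_sum]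
      refine Finset.sum_congr rfl fun i _ => ?_
      rw [Finset.mul_sum]
      refine Finset.sum_congr rfl fun j _ => ?_
      have h1 : (ε • z) i = ε * z i := by simp
      have h2 : (ε • z) j = ε * z j := by simp
      rw [h1, h2]; ring
    have hnorm : ‖ε • z‖ = ε * ‖z‖ := by
      rw [norm_smul, Real.norm_eq_abs, abs_of_pos hε]
    rw [hsum] at t1
    refine t1.trans (le_of_eq ?_)
    rw [hnorm]
    have h3 : (ε * ‖z‖) ^ α = ε ^ α * ‖z‖ ^ α :=
      Real.mul_rpow hε.le (norm_nonneg _)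
    have h4 : ‖z‖ ^ ((2:ℝ)+α) = ‖z‖^(2:ℕ) * ‖z‖ ^ α := by
      rw [Real.rpow_add_of_nonneg (norm_nonneg _) (by norm_num) hα0.le, Real.rpow_two]
    rw [h3, h4]
    ring
  have key5 : |S - ε ^ 2 * (CJ * lap f x)|
      ≤ 2 * n^2 * H * (ε^2 * ε ^ α) * ∫ z, J z * ‖z‖ ^ ((2:ℝ)+α) := by
    have hrepr : S - ε ^ 2 * (CJ * lap f x) = ∫ z, J z * (A z - ε ^ 2 * Qf z) := by
      have e1 : ε ^ 2 * (CJ * lap f x) = ∫ z, J z * (ε ^ 2 * Qf z) := by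
        rw [← step4, ← MeasureTheory.integral_const_mul]
        congr 1; funext z; ring
      rw [hS, e1, ← integral_sub intA intQ]
      congr 1; funext z; ring
    rw [hrepr]
    have := norm_integral_le_of_norm_le (f := fun z => J z * (A z - ε ^ 2 * Qf z))
      (g := fun z => J z * (2 * n^2 * H * (ε^2 * ε ^ α) * ‖z‖ ^ ((2:ℝ)+α)))
      intmaj (Filter.Eventually.of_forall fun z => by
        rw [Real.norm_eq_abs, abs_mul, abs_of_nonneg (hJ0 z)]
        exact mul_le_mul_of_nonneg_left (tay z) (hJ0 z))
    rw [Real.norm_eq_abs] at this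
    refine this.trans (le_of_eq ?_)
    rw [← MeasureTheory.integral_const_mul]
    congr 1; funext z; ring
  rw [hLop]
  have hden : (0:ℝ) < CJ * ε ^ 2 := by positivity
  have hfrac : S / (CJ * ε ^ 2) - lap f x = (S - ε ^ 2 * (CJ * lap f x)) / (CJ * ε ^ 2) := by
    field_simp
  rw [hfrac, abs_div, abs_of_pos hden, div_le_iff₀ hden]
  refine key5.trans (le_of_eq ?_)
  have hCJne : CJ ≠ 0 := hCJ.ne'
  field_simp

lemma maxprin {Ω : Set (EuclideanSpace ℝ (Fin n))} (hΩb : Bornology.IsBounded Ω)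
    {T : ℝ} (hT : 0 < T) (ψ : EuclideanSpace ℝ (Fin n) → ℝ → ℝ) {B : ℝ} (hB : 0 ≤ B)
    (hψc : ContinuousOn (fun p : EuclideanSpace ℝ (Fin n) × ℝ => ψ p.1 p.2)
      (closure Ω ×ˢ Icc (0:ℝ) T))
    (hψ0 : ∀ x ∈ closure Ω, ψ x 0 ≤ 0)
    (hψout : ∀ x ∉ Ω, ∀ t ∈ Icc (0:ℝ) T, ψ x t ≤ 0)
    (hder : ∀ x ∈ Ω, ∀ t ∈ Ioc (0:ℝ) T, (∀ y, ψ y t ≤ ψ x t) → 0 < ψ x t →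
      ∃ d, HasDerivWithinAt (fun s => ψ x s) d (Icc (0:ℝ) T) t ∧ d ≤ B) :
    ∀ x ∈ closure Ω, ∀ t ∈ Icc (0:ℝ) T, ψ x t ≤ B * T := by
  have key : ∀ δ > (0:ℝ), ∀ x ∈ closure Ω, ∀ t ∈ Icc (0:ℝ) T, ψ x t - (B + δ) * t ≤ 0 := by
    intro δ hδ
    by_contra hcon
    push_neg at hcon
    obtain ⟨xw, hxw, tw, htw, hw⟩ := hcon
    set Φ : EuclideanSpace ℝ (Fin n) × ℝ → ℝ := fun p => ψ p.1 p.2 - (B + δ) * p.2 with hΦ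
    set K : Set (EuclideanSpace ℝ (Fin n) × ℝ) := closure Ω ×ˢ Icc (0:ℝ) T with hK
    have hKc : IsCompact K := by
      refine IsCompact.prod ?_ isCompact_Icc
      exact Metric.isCompact_of_isClosed_isBounded isClosed_closure hΩb.closure
    have hKne : K.Nonempty := ⟨(xw, tw), by exact ⟨hxw, htw⟩⟩
    have hΦc : ContinuousOn Φ K :=
      hψc.sub ((continuous_const.mul (continuous_snd)).continuousOn)
    obtain ⟨p₀, hp₀K, hmax⟩ := hKc.exists_isMaxOn hKne hΦc
    have hmax' : ∀ p ∈ K, Φ p ≤ Φ p₀ := hmax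
    have hΦpos : 0 < Φ p₀ := lt_of_lt_of_le hw (hmax' (xw, tw) ⟨hxw, htw⟩)
    obtain ⟨x₀, t₀⟩ := p₀
    have hx₀cl : x₀ ∈ closure Ω := hp₀K.1
    have ht₀ : t₀ ∈ Icc (0:ℝ) T := hp₀K.2
    have hψpos : 0 < ψ x₀ t₀ := by
      have h0 : 0 ≤ (B + δ) * t₀ := mul_nonneg (by linarith) ht₀.1
      have : 0 < ψ x₀ t₀ - (B + δ) * t₀ := hΦpos
      linarith
    have hx₀ : x₀ ∈ Ω := by
      by_contra hx
      exact absurd (hψout x₀ hx t₀ ht₀) (not_le.2 hψpos)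
    have ht₀pos : 0 < t₀ := by
      rcases lt_or_eq_of_le ht₀.1 with h | h
      · exact h
      · exfalso
        have := hψ0 x₀ hx₀cl
        rw [← h] at hΦpos
        simp only [hΦ, mul_zero, sub_zero] at hΦpos
        linarith
    have hglob : ∀ y, ψ y t₀ ≤ ψ x₀ t₀ := by
      intro y
      by_cases hy : y ∈ closure Ω
      · have := hmax' (y, t₀) ⟨hy, ht₀⟩
        simp only [hΦ] at this
        linarith
      · have : ψ y t₀ ≤ 0 := hψout y (fun h => hy (subset_closure h)) t₀ ht₀
        linarith
    obtain ⟨d, hd, hdB⟩ := hder x₀ hx₀ t₀ ⟨ht₀pos, ht₀.2⟩ hglob hψpos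
    have hΦd : HasDerivWithinAt (fun s => ψ x₀ s - (B + δ) * s) (d - (B + δ))
        (Icc (0:ℝ) t₀) t₀ := by
      have h1 : HasDerivWithinAt (fun s : ℝ => (B + δ) * s) (B + δ) (Icc (0:ℝ) t₀) t₀ := by
        simpa using ((hasDerivAt_id t₀).const_mul (B + δ)).hasDerivWithinAt
      exact (hd.mono (Icc_subset_Icc le_rfl ht₀.2)).sub h1
    have hmaxt : IsMaxOn (fun s => ψ x₀ s - (B + δ) * s) (Icc (0:ℝ) t₀) t₀ := by
      intro s hs
      have hsIcc : s ∈ Icc (0:ℝ) T := ⟨hs.1, le_trans hs.2 ht₀.2⟩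
      have := hmax' (x₀, s) ⟨hx₀cl, hsIcc⟩
      simpa only [hΦ, Set.mem_setOf_eq] using this
    have hlocal : IsLocalMaxOn (fun s => ψ x₀ s - (B + δ) * s) (Icc (0:ℝ) t₀) t₀ :=
      hmaxt.filter_mono inf_le_right
    have htan : -t₀ ∈ posTangentConeAt (Icc (0:ℝ) t₀) t₀ := by
      apply mem_posTangentConeAt_of_segment_subset
      rw [show t₀ + -t₀ = 0 by ring, segment_symm, segment_eq_Icc ht₀pos.le]
    have hnonpos := hlocal.hasFDerivWithinAt_nonpos hΦd.hasFDerivWithinAt htan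
    have : -t₀ * (d - (B + δ)) ≤ 0 := by
      simpa using hnonpos
    nlinarith
  intro x hx t ht
  have hle : ∀ δ > (0:ℝ), ψ x t ≤ B * T + δ * T := by
    intro δ hδ
    have := key δ hδ x hx t ht
    have h1 : (B + δ) * t ≤ (B + δ) * T := by
      apply mul_le_mul_of_nonneg_left ht.2 (by linarith)
    nlinarith
  by_contra hcon
  push_neg at hcon
  have hδ : (ψ x t - B * T) / (2 * T) > 0 := div_pos (by linarith) (by linarith)
  have := hle _ hδ
  have h2 : (ψ x t - B * T) / (2 * T) * T = (ψ x t - B * T)/2 := by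
    field_simp
  rw [h2] at this
  linarith

end Helpers

/-- Solutions of the rescaled nonlocal Dirichlet problems `∂ₜu^ε = ℒ_ε u^ε` uniformly
approximate, at rate `ε^α`, the solution of the Fokker–Planck Dirichlet problem
`∂ₜv = Δ(a v)`. -/
theorem stmt10 (n : ℕ) (hn : 1 ≤ n)
    (J : EuclideanSpace ℝ (Fin n) → ℝ) (hJint : Integrable J)
    (hJcs : HasCompactSupport J) (hJ0 : ∀ x, 0 ≤ J x) (hJeven : ∀ x, J (-x) = J x)
    (CJ : ℝ) (hCJ : 0 < CJ)
    (hJmom : ∀ i j : Fin n, ∫ x, J x * (x i * x j) = if i = j then CJ else 0)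
    (α : ℝ) (hα : α ∈ Ioc (0:ℝ) 1) (H : ℝ) (hH : 0 ≤ H)
    (Ω : Set (EuclideanSpace ℝ (Fin n))) (hΩo : IsOpen Ω) (hΩb : Bornology.IsBounded Ω)
    (T : ℝ) (hT : 0 < T)
    (g : EuclideanSpace ℝ (Fin n) → ℝ → ℝ) (u₀ : EuclideanSpace ℝ (Fin n) → ℝ)
    -- the coefficient a
    (a : EuclideanSpace ℝ (Fin n) → ℝ) (ha : ContDiff ℝ (⊤ : ℕ∞) a)
    (habdd : ∀ k : ℕ, ∃ C, ∀ x, ‖iteratedFDeriv ℝ k a x‖ ≤ C)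
    (a₀ : ℝ) (ha₀ : 0 < a₀) (halb : ∀ x, a₀ ≤ a x)
    -- the solution ṽ of the Fokker–Planck problem
    (v : EuclideanSpace ℝ (Fin n) → ℝ → ℝ)
    (hvbdd : ∃ C, ∀ x t, |v x t| ≤ C)
    (hvcont : Continuous (fun p : EuclideanSpace ℝ (Fin n) × ℝ => v p.1 p.2))
    (vt : EuclideanSpace ℝ (Fin n) → ℝ → ℝ)
    (hvt : ∀ x, ∀ t ∈ Icc (0:ℝ) T, HasDerivWithinAt (fun s => v x s) (vt x t) (Icc (0:ℝ) T) t)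
    (hvtcont : ∀ x, ContinuousOn (vt x) (Icc (0:ℝ) T))
    (hvC2 : ∀ t ∈ Icc (0:ℝ) T, ContDiff ℝ 2 (fun x => a x * v x t))
    (hvder : ∃ C, ∀ t ∈ Icc (0:ℝ) T, ∀ x,
      ‖fderiv ℝ (fun y => a y * v y t) x‖ ≤ C ∧
      ‖fderiv ℝ (fderiv ℝ (fun y => a y * v y t)) x‖ ≤ C)
    (hvHolder : ∀ t ∈ Icc (0:ℝ) T, ∀ x y, ∀ i j : Fin n,
      |pd2 (fun z => a z * v z t) x i j - pd2 (fun z => a z * v z t) y i j| ≤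
        H * ‖x - y‖ ^ α)
    (hveq : ∀ x ∈ Ω, ∀ t ∈ Ioc (0:ℝ) T, vt x t = lap (fun y => a y * v y t) x)
    (hvbc : ∀ x ∉ Ω, ∀ t ∈ Icc (0:ℝ) T, v x t = g x t)
    (hvic : ∀ x ∈ Ω, v x 0 = u₀ x)
    -- the solutions u^ε of the nonlocal problems
    (uε : ℝ → EuclideanSpace ℝ (Fin n) → ℝ → ℝ)
    (huεbdd : ∀ ε ∈ Ioc (0:ℝ) 1, ∃ C, ∀ x t, |uε ε x t| ≤ C)
    (huεcont : ∀ ε ∈ Ioc (0:ℝ) 1,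
      ContinuousOn (fun p : EuclideanSpace ℝ (Fin n) × ℝ => uε ε p.1 p.2)
        (closure Ω ×ˢ Icc (0:ℝ) T))
    (huεeq : ∀ ε ∈ Ioc (0:ℝ) 1, ∀ x ∈ Ω, ∀ t ∈ Ioc (0:ℝ) T,
      HasDerivWithinAt (fun s => uε ε x s)
        (Lop J CJ a ε (fun y => uε ε y t) x) (Icc (0:ℝ) T) t)
    (huεbc : ∀ ε ∈ Ioc (0:ℝ) 1, ∀ x ∉ Ω, ∀ t ∈ Icc (0:ℝ) T, uε ε x t = g x t)
    (huεic : ∀ ε ∈ Ioc (0:ℝ) 1, ∀ x ∈ Ω, uε ε x 0 = u₀ x) :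
    ∃ c : ℝ, ∀ ε ∈ Ioc (0:ℝ) 1, ∀ x ∈ Ω, ∀ t ∈ Icc (0:ℝ) T,
      |uε ε x t - v x t| ≤ c * ε ^ α := by
  obtain ⟨Ca, hCa0⟩ := habdd 0
  have hCa : ∀ x, |a x| ≤ Ca := fun x => by
    have := hCa0 x
    rwa [norm_iteratedFDeriv_zero, Real.norm_eq_abs] at this
  have hCapos : 0 < Ca :=
    lt_of_lt_of_le ha₀ ((halb 0).trans ((le_abs_self _).trans (hCa 0)))
  obtain ⟨Cv, hCv⟩ := hvbdd
  set M₂ : ℝ := ∫ z, J z * ‖z‖ ^ ((2:ℝ)+α) with hM₂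
  have hM₂0 : 0 ≤ M₂ := integral_nonneg fun z =>
    mul_nonneg (hJ0 z) (Real.rpow_nonneg (norm_nonneg _) _)
  set K : ℝ := 2 * n^2 * H / CJ * M₂ with hKdef
  have hK0 : 0 ≤ K := by positivity
  refine ⟨Ca * K * T / a₀, ?_⟩
  intro ε hε x hx t ht
  have hε0 : 0 < ε := hε.1
  have hεα : 0 ≤ ε ^ α := Real.rpow_nonneg hε0.le α
  obtain ⟨Cu, hCu⟩ := huεbdd ε hε
  -- the key one-sided estimate, for both signs σ = ±1
  have main : ∀ σ : ℝ, |σ| = 1 →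
      ∀ x ∈ closure Ω, ∀ t ∈ Icc (0:ℝ) T,
        σ * (a x * (uε ε x t - v x t)) ≤ Ca * (K * ε ^ α) * T := by
    intro σ hσ
    have hB0 : 0 ≤ Ca * (K * ε ^ α) := by positivity
    refine maxprin hΩb hT (fun y τ => σ * (a y * (uε ε y τ - v y τ))) hB0 ?_ ?_ ?_ ?_
    · -- continuity
      refine (continuous_const.continuousOn).mul (ContinuousOn.mul
        ((ha.continuous.comp continuous_fst).continuousOn) ?_)
      exact (huεcont ε hε).sub hvcont.continuousOn
    · -- initial values
      intro y hy
      show σ * (a y * (uε ε y 0 - v y 0)) ≤ 0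
      by_cases hyΩ : y ∈ Ω
      · rw [huεic ε hε y hyΩ, hvic y hyΩ]
        simp
      · rw [huεbc ε hε y hyΩ 0 ⟨le_rfl, hT.le⟩, hvbc y hyΩ 0 ⟨le_rfl, hT.le⟩]
        simp
    · -- boundary values
      intro y hy τ hτ
      show σ * (a y * (uε ε y τ - v y τ)) ≤ 0
      rw [huεbc ε hε y hy τ hτ, hvbc y hy τ hτ]
      simp
    · -- the derivative estimate at an interior positive maximum
      intro x hxΩ t htIoc hglob hpos
      have htIcc : t ∈ Icc (0:ℝ) T := ⟨htIoc.1.le, htIoc.2⟩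
      set f : EuclideanSpace ℝ (Fin n) → ℝ := fun y => a y * v y t with hf
      have hfC2 : ContDiff ℝ 2 f := hvC2 t htIcc
      have hfb : ∀ z, |f z| ≤ Ca * Cv := fun z => by
        rw [hf, abs_mul]
        exact mul_le_mul (hCa z) (hCv z t) (abs_nonneg _) hCapos.le
      have hfHol : ∀ x y, ∀ i j : Fin n, |pd2 f x i j - pd2 f y i j| ≤ H * ‖x - y‖ ^ α :=
        fun x y i j => hvHolder t htIcc x y i j
      have consist := consistency J hJint hJcs hJ0 hJeven CJ hCJ hJmom hα.1 hH hfC2 hfb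
        hfHol x hε0
      rw [← hM₂, ← hKdef] at consist
      -- integrability of the pieces of the nonlocal operator
      have hJsh : Integrable (fun y => J (ε⁻¹ • (x - y))) := by
        have h1 : Integrable (fun u : EuclideanSpace ℝ (Fin n) => J (ε⁻¹ • u)) :=
          (integrable_comp_smul_iff volume J (inv_ne_zero hε0.ne')).2 hJint
        exact h1.comp_sub_left x
      have hJsh0 : ∀ y, 0 ≤ J (ε⁻¹ • (x - y)) := fun y => hJ0 _
      -- measurability of the difference w(·,t)
      set W : EuclideanSpace ℝ (Fin n) → ℝ := fun y => uε ε y t - v y t with hW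
      have hWind : W = Ω.indicator W := by
        funext y
        by_cases hy : y ∈ Ω
        · rw [indicator_of_mem hy]
        · rw [indicator_of_notMem hy, hW]
          simp only [huεbc ε hε y hy t htIcc, hvbc y hy t htIcc, sub_self]
      have hWcont : ContinuousOn W Ω := by
        have h1 : ContinuousOn (fun y => uε ε y t) (closure Ω) := by
          refine (huεcont ε hε).comp
            ((continuous_id.prodMk continuous_const).continuousOn) (fun y hy => ?_)
          exact ⟨hy, htIcc⟩
        exact ((h1.mono subset_closure).sub
          ((hvcont.comp (continuous_id.prodMk continuous_const)).continuousOn))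
      have hWm : AEStronglyMeasurable W volume := by
        rw [hWind]
        exact (aestronglyMeasurable_indicator_iff hΩo.measurableSet).2
          (hWcont.aestronglyMeasurable hΩo.measurableSet)
      have hWb : ∀ y, |W y| ≤ Cu + Cv := fun y => by
        rw [hW]
        calc |uε ε y t - v y t| ≤ |uε ε y t| + |v y t| := abs_sub _ _
          _ ≤ Cu + Cv := add_le_add (hCu y t) (hCv y t)
      set wd : EuclideanSpace ℝ (Fin n) → ℝ := fun y => a y * W y - a x * W x with hwd
      have hwdm : AEStronglyMeasurable wd volume :=
        ((ha.continuous.aestronglyMeasurable).mul hWm).sub aestronglyMeasurable_const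
      have hwdb : ∀ y, |wd y| ≤ 2 * (Ca * (Cu + Cv)) := fun y => by
        rw [hwd]
        have h1 : ∀ z, |a z * W z| ≤ Ca * (Cu + Cv) := fun z => by
          rw [abs_mul]
          exact mul_le_mul (hCa z) (hWb z) (abs_nonneg _) hCapos.le
        calc |a y * W y - a x * W x| ≤ |a y * W y| + |a x * W x| := abs_sub _ _
          _ ≤ 2 * (Ca * (Cu + Cv)) := by have := h1 y; have := h1 x; linarith
      have intw : Integrable (fun y => J (ε⁻¹ • (x - y)) * wd y) :=
        integrable_mul_bdd hJsh hwdm hwdb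
      have intf : Integrable (fun y => J (ε⁻¹ • (x - y)) * (f y - f x)) := by
        refine integrable_mul_bdd hJsh ((hfC2.continuous.sub continuous_const)
          |>.aestronglyMeasurable) (M := 2 * (Ca * Cv)) (fun y => ?_)
        calc |f y - f x| ≤ |f y| + |f x| := abs_sub _ _
          _ ≤ 2 * (Ca * Cv) := by have := hfb y; have := hfb x; linarith
      -- split the nonlocal operator
      have hsplit : Lop J CJ a ε (fun y => uε ε y t) x
          = 2 / (CJ * ε ^ (n + 2)) * ((∫ y, J (ε⁻¹ • (x - y)) * wd y)
            + ∫ y, J (ε⁻¹ • (x - y)) * (f y - f x)) := by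
        rw [Lop, ← integral_add intw intf]
        congr 1
        refine integral_congr_ae (Filter.Eventually.of_forall fun y => ?_)
        rw [hwd, hW, hf]
        ring
      -- the derivative
      refine ⟨σ * (a x * (Lop J CJ a ε (fun y => uε ε y t) x - vt x t)), ?_, ?_⟩
      · exact (((huεeq ε hε x hxΩ t htIoc).sub (hvt x t htIcc)).const_mul (a x)).const_mul σ
      · -- estimate
        have hveqx : vt x t = lap f x := hveq x hxΩ t htIoc
        set pref : ℝ := 2 / (CJ * ε ^ (n + 2)) with hpref
        have hpref0 : 0 ≤ pref := by positivity
        have hsign : pref * ∫ y, J (ε⁻¹ • (x - y)) * (σ * wd y) ≤ 0 := by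
          refine mul_nonpos_of_nonneg_of_nonpos hpref0 (integral_nonpos fun y => ?_)
          refine mul_nonpos_of_nonneg_of_nonpos (hJsh0 y) ?_
          have := hglob y
          have hexp : σ * wd y = σ * (a y * (uε ε y t - v y t))
              - σ * (a x * (uε ε x t - v x t)) := by
            rw [hwd, hW]; ring
          rw [hexp]
          linarith
        have hpull : σ * ∫ y, J (ε⁻¹ • (x - y)) * wd y
            = ∫ y, J (ε⁻¹ • (x - y)) * (σ * wd y) := by
          rw [← MeasureTheory.integral_const_mul σ]
          exact integral_congr_ae (Filter.Eventually.of_forall fun y => by ring)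
        have hσint : σ * (pref * ∫ y, J (ε⁻¹ • (x - y)) * wd y)
            = pref * ∫ y, J (ε⁻¹ • (x - y)) * (σ * wd y) := by
          calc σ * (pref * ∫ y, J (ε⁻¹ • (x - y)) * wd y)
              = pref * (σ * ∫ y, J (ε⁻¹ • (x - y)) * wd y) := by ring
            _ = _ := by rw [hpull]
        have hcons2 : σ * (pref * (∫ y, J (ε⁻¹ • (x - y)) * (f y - f x)) - lap f x)
            ≤ K * ε ^ α := by
          have habs : |σ * (pref * (∫ y, J (ε⁻¹ • (x - y)) * (f y - f x)) - lap f x)|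
              = |pref * (∫ y, J (ε⁻¹ • (x - y)) * (f y - f x)) - lap f x| := by
            rw [abs_mul, hσ, one_mul]
          exact le_trans (le_abs_self _) (by rw [habs]; exact consist)
        have hrw : σ * (a x * (Lop J CJ a ε (fun y => uε ε y t) x - vt x t))
            = a x * ((σ * (pref * ∫ y, J (ε⁻¹ • (x - y)) * wd y))
              + σ * (pref * (∫ y, J (ε⁻¹ • (x - y)) * (f y - f x)) - lap f x)) := by
          rw [hsplit, hveqx, hpref]
          ring
        rw [hrw, hσint]
        have hax0 : 0 ≤ a x := le_trans ha₀.le (halb x)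
        have haxCa : a x ≤ Ca := le_trans (le_abs_self _) (hCa x)
        calc a x * ((pref * ∫ y, J (ε⁻¹ • (x - y)) * (σ * wd y))
              + σ * (pref * (∫ y, J (ε⁻¹ • (x - y)) * (f y - f x)) - lap f x))
            ≤ a x * (K * ε ^ α) := by
              refine mul_le_mul_of_nonneg_left ?_ hax0
              have := hsign; have := hcons2; linarith
          _ ≤ Ca * (K * ε ^ α) := mul_le_mul_of_nonneg_right haxCa (by positivity)
  -- conclusion
  have h1 := main 1 (by norm_num) x (subset_closure hx) t ht
  have h2 := main (-1) (by norm_num) x (subset_closure hx) t ht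
  rw [one_mul] at h1
  have h2' : -(a x * (uε ε x t - v x t)) ≤ Ca * (K * ε ^ α) * T := by
    rw [show -(a x * (uε ε x t - v x t)) = (-1) * (a x * (uε ε x t - v x t)) by ring]
    exact h2
  have habsw : |a x * (uε ε x t - v x t)| ≤ Ca * (K * ε ^ α) * T := abs_le.2 ⟨by linarith, h1⟩
  have hax : a₀ ≤ a x := halb x
  have hfin : a₀ * |uε ε x t - v x t| ≤ Ca * (K * ε ^ α) * T := by
    calc a₀ * |uε ε x t - v x t| ≤ a x * |uε ε x t - v x t| :=
          mul_le_mul_of_nonneg_right hax (abs_nonneg _)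
      _ = |a x * (uε ε x t - v x t)| := by
          rw [abs_mul, abs_of_pos (lt_of_lt_of_le ha₀ hax)]
      _ ≤ _ := habsw
  rw [show Ca * K * T / a₀ * ε ^ α = (Ca * (K * ε ^ α) * T) / a₀ by field_simp]
  rw [le_div_iff₀ ha₀]
  linarith [hfin]
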